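/- arXiv:2110.03656 — 5 statements merged into one kernel-verified Lean document; each statement's English description precedes it below -/
import Mathlib

section
/- Let Erfc(s) = 2·∫_s^∞ (1/√π) e^{-x²} dx and N_t(a) = (1/√(πt)) exp(−a²/t). Then for all a > 0, ∫_0^∞ Erfc(1/√t) · N_t(a) · t^{-1} dt = (2/π) · arctan(a)/a. -/
/-!
Substituting `x = u / √t` gives `Erfc (1 / √t) = 2 (π t)^{-1/2} ∫_1^∞ e^{-u²/t} du`, so the integrand
is `(2/π) ∫_1^∞ t⁻² e^{-(u²+a²)/t} du`. Integrating in `t` first (Tonelli), the substitution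
`t ↦ 1/t` turns `∫_0^∞ t⁻² e^{-c/t} dt` into the Laplace integral `∫_0^∞ e^{-cs} ds = 1/c`, which
leaves `(2/π) ∫_1^∞ du / (u² + a²) = (2/π) (π/2 - arctan (1/a)) / a = (2/π) arctan a / a`.
-/

open Real MeasureTheory

/-- The Gaussian kernel `N_t(x) = (π t)^{-1/2} exp(-x²/t)`. -/
noncomputable def gaussN (t x : ℝ) : ℝ := (Real.sqrt (Real.pi * t))⁻¹ * Real.exp (-(x ^ 2) / t)

/-- The complementary error function `Erfc(s) = 2 ∫_s^∞ π^{-1/2} e^{-x²} dx`. -/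
noncomputable def Erfc (s : ℝ) : ℝ :=
  2 * ∫ x in Set.Ioi s, (Real.sqrt Real.pi)⁻¹ * Real.exp (-(x ^ 2))

open Set Function Filter Topology

theorem integral_integral_swap_of_nonneg {α β : Type*} [MeasurableSpace α] [MeasurableSpace β]
    {μ : Measure α} {ν : Measure β} [SFinite μ] [SFinite ν] {f : α → β → ℝ}
    (hf : AEStronglyMeasurable (uncurry f) (μ.prod ν)) (hf_nonneg : ∀ x y, 0 ≤ f x y)
    (hf_int : ∀ᵐ y ∂ν, Integrable (f · y) μ) (hf_int' : Integrable (fun y ↦ ∫ x, f x y ∂μ) ν) :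
    ∫ x, ∫ y, f x y ∂ν ∂μ = ∫ y, ∫ x, f x y ∂μ ∂ν := by
  refine integral_integral_swap ((integrable_prod_iff' hf).2 ⟨hf_int, ?_⟩)
  simpa only [uncurry_apply_pair, Real.norm_of_nonneg (hf_nonneg _ _)] using hf_int'

section

variable {E : Type*} [NormedAddCommGroup E] [NormedSpace ℝ E]

private lemma abs_neg_one_mul_rpow_neg_one_sub_one {t : ℝ} (ht : 0 < t) :
    |(-1 : ℝ)| * t ^ ((-1 : ℝ) - 1) = (t ^ 2)⁻¹ := by
  rw [abs_neg, abs_one, one_mul, show (-1 : ℝ) - 1 = -(2 : ℕ) by norm_num,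
    rpow_neg ht.le, rpow_natCast]

theorem integrableOn_Ioi_inv_sq_smul_comp_inv_iff (g : ℝ → E) :
    IntegrableOn (fun t ↦ (t ^ 2)⁻¹ • g t⁻¹) (Ioi 0) ↔ IntegrableOn g (Ioi 0) := by
  rw [← integrableOn_Ioi_comp_rpow_iff g (neg_ne_zero.2 one_ne_zero)]
  refine integrableOn_congr_fun (fun t (ht : 0 < t) ↦ ?_) measurableSet_Ioi
  rw [abs_neg_one_mul_rpow_neg_one_sub_one ht, rpow_neg_one]

theorem integral_Ioi_inv_sq_smul_comp_inv (g : ℝ → E) :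
    ∫ t in Ioi 0, (t ^ 2)⁻¹ • g t⁻¹ = ∫ s in Ioi 0, g s := by
  rw [← integral_comp_rpow_Ioi g (neg_ne_zero.2 one_ne_zero)]
  refine setIntegral_congr_fun measurableSet_Ioi (fun t (ht : 0 < t) ↦ ?_)
  rw [abs_neg_one_mul_rpow_neg_one_sub_one ht, rpow_neg_one]

end

theorem integrableOn_inv_sq_mul_exp_neg_div {c : ℝ} (hc : 0 < c) :
    IntegrableOn (fun t ↦ (t ^ 2)⁻¹ * exp (-c / t)) (Ioi 0) := by
  simpa only [smul_eq_mul, neg_div, div_eq_mul_inv, neg_mul] using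
    (integrableOn_Ioi_inv_sq_smul_comp_inv_iff (fun s ↦ exp (-c * s))).2
      (integrableOn_exp_mul_Ioi (neg_lt_zero.2 hc) 0)

theorem integral_inv_sq_mul_exp_neg_div {c : ℝ} (hc : 0 < c) :
    ∫ t in Ioi 0, (t ^ 2)⁻¹ * exp (-c / t) = c⁻¹ := by
  have h := integral_Ioi_inv_sq_smul_comp_inv (fun s ↦ exp (-c * s))
  simp only [smul_eq_mul, integral_exp_mul_Ioi (neg_lt_zero.2 hc), mul_zero, exp_zero] at h
  simpa [neg_div, div_eq_mul_inv] using h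

theorem integrable_inv_sq_add_sq {a : ℝ} (ha : a ≠ 0) :
    Integrable (fun u : ℝ ↦ (u ^ 2 + a ^ 2)⁻¹) := by
  refine ((integrable_inv_one_add_sq.comp_div ha).const_mul (a ^ 2)⁻¹).congr
    (ae_of_all _ fun u ↦ ?_)
  field_simp
  ring

theorem integral_Ioi_inv_sq_add_sq {a : ℝ} (ha : 0 < a) (b : ℝ) :
    ∫ u in Ioi b, (u ^ 2 + a ^ 2)⁻¹ = (π / 2 - arctan (b / a)) / a := by
  have hderiv (u : ℝ) : HasDerivAt (fun u ↦ arctan (u / a) / a) (u ^ 2 + a ^ 2)⁻¹ u := by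
    refine (((hasDerivAt_id' u).div_const a).arctan.div_const a).congr_deriv ?_
    field_simp
    ring
  have hlim : Tendsto (fun u ↦ arctan (u / a) / a) atTop (𝓝 (π / 2 / a)) :=
    ((tendsto_nhds_of_tendsto_nhdsWithin tendsto_arctan_atTop).comp
      (tendsto_id.atTop_div_const ha)).div_const a
  rw [integral_Ioi_of_hasDerivAt_of_tendsto' (fun u _ ↦ hderiv u)
    (integrable_inv_sq_add_sq ha.ne').integrableOn hlim, sub_div]

theorem Erfc_div_sqrt (s : ℝ) {t : ℝ} (ht : 0 < t) :
    Erfc (s / √t) = 2 / √(π * t) * ∫ u in Ioi s, exp (-u ^ 2 / t) := by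
  have hst : 0 < √t := sqrt_pos.2 ht
  have hscale (u : ℝ) : -((√t)⁻¹ * u) ^ 2 = -u ^ 2 / t := by
    rw [mul_pow, inv_pow, sq_sqrt ht.le]; ring
  have hsub : ∫ x in Ioi (s / √t), (√π)⁻¹ * exp (-x ^ 2) =
      (√t)⁻¹ * ∫ u in Ioi s, (√π)⁻¹ * exp (-u ^ 2 / t) := by
    rw [div_eq_inv_mul, ← integral_comp_mul_left_Ioi' _ s (inv_pos.2 hst), smul_eq_mul]
    simp only [hscale]
  rw [Erfc, hsub, integral_const_mul, sqrt_mul pi_pos.le]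
  field_simp

theorem Erfc_one_div_sqrt_mul_gaussN (a : ℝ) {t : ℝ} (ht : 0 < t) :
    Erfc (1 / √t) * gaussN t a * t⁻¹ =
      2 / π * ∫ u in Ioi 1, (t ^ 2)⁻¹ * exp (-(u ^ 2 + a ^ 2) / t) := by
  have hexp (u : ℝ) : exp (-(u ^ 2 + a ^ 2) / t) = exp (-a ^ 2 / t) * exp (-u ^ 2 / t) := by
    rw [← exp_add]; ring_nf
  have hsq : √(π * t) ^ 2 = π * t := sq_sqrt (by positivity)
  simp only [hexp, ← mul_assoc, integral_const_mul]
  rw [Erfc_div_sqrt 1 ht, gaussN]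
  field_simp
  rw [hsq]

/-- The integral identity
`∫_0^∞ Erfc(1/√t) N_t(a) t⁻¹ dt = (2/π) arctan(a)/a` for `a > 0`. -/
theorem erfc_gauss_integral (a : ℝ) (ha : 0 < a) :
    (∫ t in Set.Ioi (0 : ℝ), Erfc (1 / Real.sqrt t) * gaussN t a * t⁻¹)
      = (2 / Real.pi) * Real.arctan a / a := by
  set F : ℝ → ℝ → ℝ := fun t u ↦ (t ^ 2)⁻¹ * exp (-(u ^ 2 + a ^ 2) / t)
  have hc (u : ℝ) : 0 < u ^ 2 + a ^ 2 := by positivity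
  have hswap : ∫ t in Ioi 0, ∫ u in Ioi 1, F t u = ∫ u in Ioi 1, ∫ t in Ioi 0, F t u :=
    integral_integral_swap_of_nonneg (by fun_prop) (fun t u ↦ by positivity)
      (ae_of_all _ fun u ↦ integrableOn_inv_sq_mul_exp_neg_div (hc u))
      ((integrable_inv_sq_add_sq ha.ne').integrableOn.congr_fun
        (fun u _ ↦ (integral_inv_sq_mul_exp_neg_div (hc u)).symm) measurableSet_Ioi)
  calc ∫ t in Ioi 0, Erfc (1 / √t) * gaussN t a * t⁻¹
      = ∫ t in Ioi 0, 2 / π * ∫ u in Ioi 1, F t u :=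
        setIntegral_congr_fun measurableSet_Ioi fun t ht ↦ Erfc_one_div_sqrt_mul_gaussN a ht
    _ = 2 / π * ∫ u in Ioi 1, ∫ t in Ioi 0, F t u := by rw [integral_const_mul, hswap]
    _ = 2 / π * ∫ u in Ioi 1, (u ^ 2 + a ^ 2)⁻¹ := by
        simp only [F, integral_inv_sq_mul_exp_neg_div (hc _)]
    _ = 2 / π * arctan a / a := by
        rw [integral_Ioi_inv_sq_add_sq ha, one_div, arctan_inv_of_pos ha]
        ring
end

section
/- With S(a) = π·∫_0^∞ Erfc(1/√t) N_t(a) t^{-1} dt for a > 0, the function S satisfies the ODE S'(a) = 2/(a + a³) − S(a)/a on (0,∞), together with S(1) = π/2. -/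
open Real MeasureTheory

/-- `S(a) = π ∫_0^∞ Erfc(1/√t) N_t(a) t⁻¹ dt`. -/
noncomputable def Sfun (a : ℝ) : ℝ :=
  Real.pi * ∫ t in Set.Ioi (0 : ℝ), Erfc (1 / Real.sqrt t) * gaussN t a * t⁻¹

/-!
Substituting `t = a²/s²` turns `S(a)` into `(4/a) ∫_0^∞ e^{-s²} ∫_{s/a}^∞ e^{-x²} dx ds`, a
Gaussian integral over the wedge `{0 < s < a x}`. Swapping the order of integration and
rescaling `s = x u` gives `(4/a) ∫_0^a ∫_0^∞ x e^{-(1+u²)x²} dx du = (2/a) ∫_0^a du/(1+u²)`,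
so `S(a) = 2 arctan a / a`, from which the differential equation and the value at `1` are
read off.
-/

open Set

theorem integral_Ioi_comp_div_sq {E : Type*} [NormedAddCommGroup E] [NormedSpace ℝ E]
    (g : ℝ → E) {c : ℝ} (hc : 0 < c) :
    ∫ s in Ioi (0 : ℝ), (2 * c / s ^ 3) • g (c / s ^ 2) = ∫ t in Ioi (0 : ℝ), g t := by
  have himage : (fun s : ℝ => c / s ^ 2) '' Ioi 0 = Ioi 0 := by
    refine Subset.antisymm
      (image_subset_iff.2 fun s (hs : (0 : ℝ) < s) => (by positivity : (0 : ℝ) < c / s ^ 2))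
      fun t (ht : 0 < t) => ⟨√(c / t), mem_Ioi.2 (by positivity), ?_⟩
    simp only [sq_sqrt (div_pos hc ht).le]
    field_simp
  have hderiv : ∀ s ∈ Ioi (0 : ℝ),
      HasDerivWithinAt (fun s => c / s ^ 2) (-(2 * c / s ^ 3)) (Ioi 0) s := fun s (hs : 0 < s) =>
    ((hasDerivAt_pow 2 s).fun_inv (by positivity) |>.const_mul c).hasDerivWithinAt.congr_deriv
      (by field_simp; ring)
  have hanti : StrictAntiOn (fun s : ℝ => c / s ^ 2) (Ioi 0) := fun s (hs : 0 < s) r _ hsr =>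
    div_lt_div_of_pos_left hc (pow_pos hs 2) (pow_lt_pow_left₀ hsr hs.le two_ne_zero)
  conv_rhs => rw [← himage, integral_image_eq_integral_abs_deriv_smul measurableSet_Ioi hderiv
    hanti.injOn]
  refine setIntegral_congr_fun measurableSet_Ioi fun s (hs : 0 < s) => ?_
  rw [abs_neg, abs_of_pos (by positivity)]

theorem integral_mul_integral_Ioi_div_eq {g h : ℝ → ℝ} {a : ℝ} (ha : 0 < a)
    (hg : IntegrableOn g (Ioi 0)) (hh : IntegrableOn h (Ioi 0)) :
    ∫ s in Ioi 0, g s * ∫ x in Ioi (s / a), h x =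
      ∫ x in Ioi 0, h x * ∫ s in Ioo 0 (a * x), g s := by
  set F : ℝ × ℝ → ℝ := {p | p.1 < a * p.2}.indicator fun p => g p.1 * h p.2
  have hF : Integrable F ((volume.restrict (Ioi 0)).prod (volume.restrict (Ioi 0))) :=
    (hg.mul_prod hh).indicator (measurableSet_lt measurable_fst (measurable_snd.const_mul a))
  have hinner_x (s : ℝ) (hs : 0 < s) :
      g s * ∫ x in Ioi (s / a), h x = ∫ x in Ioi 0, F (s, x) := by
    have hF_s (x : ℝ) : F (s, x) = (Ioi (s / a)).indicator (fun x => g s * h x) x := by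
      simp [F, indicator_apply, div_lt_iff₀' ha]
    simp_rw [hF_s, setIntegral_indicator measurableSet_Ioi, Ioi_inter_Ioi,
      max_eq_right (div_pos hs ha).le, integral_const_mul]
  have hinner_s (x : ℝ) (hx : 0 < x) :
      ∫ s in Ioi 0, F (s, x) = h x * ∫ s in Ioo 0 (a * x), g s := by
    have hF_x (s : ℝ) : F (s, x) = (Iio (a * x)).indicator (fun s => h x * g s) s := by
      simp [F, indicator_apply, mul_comm]
    simp_rw [hF_x, setIntegral_indicator measurableSet_Iio, Ioi_inter_Iio, integral_const_mul]
  rw [setIntegral_congr_fun measurableSet_Ioi hinner_x,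
    integral_integral_swap (f := fun s x => F (s, x)) hF]
  exact setIntegral_congr_fun measurableSet_Ioi hinner_s

theorem integral_Ioi_mul_exp_neg_mul_sq {b : ℝ} (hb : 0 < b) :
    ∫ x in Ioi (0 : ℝ), x * exp (-b * x ^ 2) = (2 * b)⁻¹ := by
  have h := integral_rpow_mul_exp_neg_mul_rpow two_pos (by norm_num : (-1 : ℝ) < 1) hb
  norm_num [Real.rpow_neg_one] at h
  simp_rw [neg_mul, h, mul_inv, mul_comm, one_div]

theorem integral_exp_neg_sq_mul_integral_Ioo {a : ℝ} (ha : 0 < a) :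
    ∫ x in Ioi 0, exp (-x ^ 2) * ∫ s in Ioo 0 (a * x), exp (-s ^ 2) = arctan a / 2 := by
  have hscale : ∀ x ∈ Ioi (0 : ℝ), exp (-x ^ 2) * ∫ s in Ioo 0 (a * x), exp (-s ^ 2) =
      ∫ u in Ioc 0 a, x * exp (-(1 + u ^ 2) * x ^ 2) := by
    intro x (hx : 0 < x)
    have hsub : ∫ s in (0)..(a * x), exp (-s ^ 2) = x * ∫ u in (0)..a, exp (-(x * u) ^ 2) := by
      simpa [mul_comm a x] using (intervalIntegral.mul_integral_comp_mul_left (a := 0) (b := a)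
        (f := fun s => exp (-s ^ 2)) x).symm
    rw [← integral_Ioc_eq_integral_Ioo, ← intervalIntegral.integral_of_le (by positivity), hsub,
      intervalIntegral.integral_of_le ha.le, ← integral_const_mul, ← integral_const_mul]
    refine setIntegral_congr_fun measurableSet_Ioc fun u _ => ?_
    rw [mul_left_comm, ← exp_add]
    ring_nf
  have hint : Integrable (Function.uncurry fun x u => x * exp (-(1 + u ^ 2) * x ^ 2))
      ((volume.restrict (Ioi 0)).prod (volume.restrict (Ioc 0 a))) := by
    refine ((integrable_mul_exp_neg_mul_sq one_pos).norm.restrict.mul_prod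
      (integrableOn_const (C := (1 : ℝ)) measure_Ioc_lt_top.ne)).mono'
      (Continuous.aestronglyMeasurable (by fun_prop)) (ae_of_all _ fun p => ?_)
    simp only [Function.uncurry, norm_mul, Real.norm_eq_abs, abs_exp, mul_one]
    gcongr
    nlinarith [mul_nonneg (sq_nonneg p.1) (sq_nonneg p.2)]
  calc _ = ∫ x in Ioi 0, ∫ u in Ioc 0 a, x * exp (-(1 + u ^ 2) * x ^ 2) :=
        setIntegral_congr_fun measurableSet_Ioi hscale
    _ = ∫ u in Ioc 0 a, ∫ x in Ioi 0, x * exp (-(1 + u ^ 2) * x ^ 2) :=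
        integral_integral_swap hint
    _ = ∫ u in Ioc 0 a, (2 * (1 + u ^ 2))⁻¹ :=
        setIntegral_congr_fun measurableSet_Ioc fun u _ =>
          integral_Ioi_mul_exp_neg_mul_sq (by positivity)
    _ = arctan a / 2 := by
        simp [← intervalIntegral.integral_of_le ha.le, integral_inv_one_add_sq]
        ring

theorem Erfc_eq_two_div_sqrt_pi_mul (s : ℝ) : Erfc s = 2 / √π * ∫ x in Ioi s, exp (-x ^ 2) := by
  rw [Erfc, integral_const_mul, div_eq_mul_inv, mul_assoc]

theorem gaussN_div_sq {a s : ℝ} (ha : 0 < a) (hs : 0 < s) :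
    gaussN (a ^ 2 / s ^ 2) a = s / (a * √π) * exp (-s ^ 2) := by
  rw [gaussN, ← div_pow, sqrt_mul pi_pos.le, sqrt_sq (by positivity)]
  field_simp

theorem Sfun_eq_integral {a : ℝ} (ha : 0 < a) :
    Sfun a = 4 / a * ∫ s in Ioi 0, exp (-s ^ 2) * ∫ x in Ioi (s / a), exp (-x ^ 2) := by
  rw [Sfun, ← integral_Ioi_comp_div_sq _ (pow_pos ha 2), ← integral_const_mul,
    ← integral_const_mul]
  refine setIntegral_congr_fun measurableSet_Ioi fun s (hs : 0 < s) => ?_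
  have hsqrt : √(a ^ 2 / s ^ 2) = a / s := by rw [← div_pow, sqrt_sq (by positivity)]
  rw [smul_eq_mul, hsqrt, one_div_div, Erfc_eq_two_div_sqrt_pi_mul, gaussN_div_sq ha hs]
  field_simp
  rw [sq_sqrt pi_pos.le]
  ring

theorem Sfun_eq_two_mul_arctan_div {a : ℝ} (ha : 0 < a) : Sfun a = 2 * arctan a / a := by
  have hgauss : IntegrableOn (fun x : ℝ => exp (-x ^ 2)) (Ioi 0) := by
    simpa using (integrable_exp_neg_mul_sq one_pos).integrableOn
  rw [Sfun_eq_integral ha, integral_mul_integral_Ioi_div_eq ha hgauss hgauss,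
    integral_exp_neg_sq_mul_integral_Ioo ha]
  ring

/-- The function `S` satisfies `S'(a) = 2/(a + a³) - S(a)/a` on `(0,∞)` and `S(1) = π/2`. -/
theorem Sfun_ode :
    (∀ a : ℝ, 0 < a → HasDerivAt Sfun (2 / (a + a ^ 3) - Sfun a / a) a) ∧
      Sfun 1 = Real.pi / 2 := by
  refine ⟨fun a ha => ?_, by rw [Sfun_eq_two_mul_arctan_div one_pos, arctan_one]; ring⟩
  have hclosed : Sfun =ᶠ[nhds a] fun b => 2 * arctan b / b :=
    Filter.eventually_of_mem (Ioi_mem_nhds ha) fun b hb => Sfun_eq_two_mul_arctan_div hb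
  have hderiv := ((hasDerivAt_arctan a).const_mul 2).div (hasDerivAt_id a) ha.ne'
  refine (hderiv.congr_of_eventuallyEq hclosed).congr_deriv ?_
  rw [Sfun_eq_two_mul_arctan_div ha, id]
  field_simp
end

section
/- Let I₀²(s) = ∫_{{x ∈ ℝ³ : x₃ > 0}} (s − x₃)(s + x₃) / (‖(x₁, x₂, x₃ − s)‖³ · ‖(x₁, x₂, x₃ + s)‖³) dx for s > 0. Then I₀²(s) = 0 for all s > 0. -/
open Real MeasureTheory

noncomputable section

private def Tmap (s : ℝ) (x : Fin 3 → ℝ) : Fin 3 → ℝ :=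
  ![s * x 0 / x 2, s * x 1 / x 2, s ^ 2 / x 2]

private def Tderiv (s : ℝ) (x : Fin 3 → ℝ) : (Fin 3 → ℝ) →L[ℝ] (Fin 3 → ℝ) :=
  LinearMap.toContinuousLinearMap (Matrix.toLin'
    !![s / x 2, 0, -(s * x 0) / x 2 ^ 2;
       0, s / x 2, -(s * x 1) / x 2 ^ 2;
       0, 0, -(s ^ 2) / x 2 ^ 2])

private lemma Tmap_hasFDerivAt (s : ℝ) {x : Fin 3 → ℝ} (hx : x 2 ≠ 0) :
    HasFDerivAt (Tmap s) (Tderiv s x) x := by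
  have hp : ∀ i : Fin 3, HasFDerivAt (fun y : Fin 3 → ℝ => y i)
      (ContinuousLinearMap.proj i : (Fin 3 → ℝ) →L[ℝ] ℝ) x := fun i =>
    hasFDerivAt_apply i x
  have hinv : HasFDerivAt (fun y : Fin 3 → ℝ => (y 2)⁻¹)
      ((-(x 2 ^ 2)⁻¹) • (ContinuousLinearMap.proj 2 : (Fin 3 → ℝ) →L[ℝ] ℝ)) x :=
    (hasDerivAt_inv hx).comp_hasFDerivAt x (hp 2)
  rw [hasFDerivAt_pi']
  intro i
  fin_cases i
  · simp only [Tmap, Matrix.cons_val_zero, div_eq_mul_inv, mul_assoc]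
    refine (((hp 0).mul hinv).const_mul s).congr_fderiv ?_
    ext v
    simp [Tderiv, Matrix.toLin'_apply, Matrix.mulVec, dotProduct, Fin.sum_univ_three,
      div_eq_mul_inv]
    field_simp
    ring
  · simp only [Tmap, Matrix.cons_val_one, Matrix.head_cons, div_eq_mul_inv, mul_assoc]
    refine (((hp 1).mul hinv).const_mul s).congr_fderiv ?_
    ext v
    simp [Tderiv, Matrix.toLin'_apply, Matrix.mulVec, dotProduct, Fin.sum_univ_three,
      div_eq_mul_inv]
    field_simp
    ring
  · simp only [Tmap, Matrix.cons_val_two, Matrix.tail_cons, Matrix.head_cons, div_eq_mul_inv]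
    refine (hinv.const_mul (s ^ 2)).congr_fderiv ?_
    ext v
    simp [Tderiv, Matrix.toLin'_apply, Matrix.mulVec, dotProduct, Fin.sum_univ_three,
      div_eq_mul_inv]
    field_simp

private lemma Tderiv_det (s : ℝ) (x : Fin 3 → ℝ) :
    (Tderiv s x).det = -(s ^ 4) / x 2 ^ 4 := by
  have : (Tderiv s x).det = LinearMap.det (Matrix.toLin'
    !![s / x 2, 0, -(s * x 0) / x 2 ^ 2;
       0, s / x 2, -(s * x 1) / x 2 ^ 2;
       0, 0, -(s ^ 2) / x 2 ^ 2]) := rfl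
  rw [this, LinearMap.det_toLin']
  rw [Matrix.det_fin_three]
  simp [Matrix.vecHead, Matrix.vecTail]
  ring

private lemma Tmap_invol (s : ℝ) (hs : s ≠ 0) {x : Fin 3 → ℝ} (hx : x 2 ≠ 0) :
    Tmap s (Tmap s x) = x := by
  funext i
  fin_cases i <;>
    simp [Tmap] <;> field_simp <;> ring

end

/-- The integral `I₀²(s)` over the upper half space vanishes:
`∫_{x₃>0} (s - x₃)(s + x₃) / (‖(x₁,x₂,x₃-s)‖³ ‖(x₁,x₂,x₃+s)‖³) dx = 0` for `s > 0`. -/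
theorem I02_vanishes (s : ℝ) (hs : 0 < s) :
    (∫ x : Fin 3 → ℝ in {x | 0 < x 2},
      (s - x 2) * (s + x 2) /
        ((Real.sqrt ((x 0) ^ 2 + (x 1) ^ 2 + (x 2 - s) ^ 2)) ^ 3 *
          (Real.sqrt ((x 0) ^ 2 + (x 1) ^ 2 + (x 2 + s) ^ 2)) ^ 3)) = 0 := by
  set U : Set (Fin 3 → ℝ) := {x | 0 < x 2} with hUdef
  set g : (Fin 3 → ℝ) → ℝ := fun x =>
    (s - x 2) * (s + x 2) /
      ((Real.sqrt ((x 0) ^ 2 + (x 1) ^ 2 + (x 2 - s) ^ 2)) ^ 3 *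
        (Real.sqrt ((x 0) ^ 2 + (x 1) ^ 2 + (x 2 + s) ^ 2)) ^ 3) with hgdef
  have hU : MeasurableSet U := measurableSet_lt measurable_const (measurable_pi_apply 2)
  have hmaps : ∀ x ∈ U, Tmap s x ∈ U := by
    intro x hx
    have : (0:ℝ) < s ^ 2 / x 2 := div_pos (pow_pos hs 2) hx
    simpa [Tmap, hUdef, Set.mem_setOf_eq] using this
  have hinvol : ∀ x ∈ U, Tmap s (Tmap s x) = x := fun x hx =>
    Tmap_invol s hs.ne' (ne_of_gt hx)
  have himg : Tmap s '' U = U := by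
    apply Set.Subset.antisymm
    · rintro _ ⟨x, hx, rfl⟩; exact hmaps x hx
    · intro x hx; exact ⟨Tmap s x, hmaps x hx, hinvol x hx⟩
  have hinj : Set.InjOn (Tmap s) U := fun a ha b hb h => by
    rw [← hinvol a ha, ← hinvol b hb, h]
  have hder : ∀ x ∈ U, HasFDerivWithinAt (Tmap s) (Tderiv s x) U x := fun x hx =>
    (Tmap_hasFDerivAt s (ne_of_gt hx)).hasFDerivWithinAt
  have key := integral_image_eq_integral_abs_det_fderiv_smul volume hU hder hinj g
  rw [himg] at key
  have h2 : (∫ x in U, |(Tderiv s x).det| • g (Tmap s x)) = ∫ x in U, -(g x) := by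
    refine setIntegral_congr_fun hU (fun x hx => ?_)
    have hx2 : (0:ℝ) < x 2 := hx
    have hx2' : x 2 ≠ 0 := ne_of_gt hx2
    have hs' : s ≠ 0 := hs.ne'
    rw [Tderiv_det, smul_eq_mul]
    have habs : |(-(s ^ 4) / x 2 ^ 4)| = s ^ 4 / x 2 ^ 4 := by
      rw [abs_div, abs_neg, abs_of_nonneg (by positivity : (0:ℝ) ≤ s ^ 4),
        abs_of_nonneg (by positivity : (0:ℝ) ≤ x 2 ^ 4)]
    rw [habs]
    have hq : (0:ℝ) ≤ s / x 2 := le_of_lt (div_pos hs hx2)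
    have e1 : (Tmap s x 0) ^ 2 + (Tmap s x 1) ^ 2 + (Tmap s x 2 - s) ^ 2
        = (s / x 2) ^ 2 * ((x 0) ^ 2 + (x 1) ^ 2 + (x 2 - s) ^ 2) := by
      simp only [Tmap, Matrix.cons_val_zero, Matrix.cons_val_one, Matrix.head_cons,
        Matrix.cons_val_two, Matrix.tail_cons]
      field_simp
      ring
    have e2 : (Tmap s x 0) ^ 2 + (Tmap s x 1) ^ 2 + (Tmap s x 2 + s) ^ 2
        = (s / x 2) ^ 2 * ((x 0) ^ 2 + (x 1) ^ 2 + (x 2 + s) ^ 2) := by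
      simp only [Tmap, Matrix.cons_val_zero, Matrix.cons_val_one, Matrix.head_cons,
        Matrix.cons_val_two, Matrix.tail_cons]
      field_simp
      ring
    have hT2 : Tmap s x 2 = s ^ 2 / x 2 := by
      simp [Tmap, Matrix.cons_val_two, Matrix.tail_cons, Matrix.head_cons]
    rw [hgdef]
    rw [hT2] at e1 e2
    simp only [hT2, e1, e2]
    rw [Real.sqrt_mul (sq_nonneg _), Real.sqrt_mul (sq_nonneg _), Real.sqrt_sq hq]
    set A := Real.sqrt ((x 0) ^ 2 + (x 1) ^ 2 + (x 2 - s) ^ 2) with hA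
    set B := Real.sqrt ((x 0) ^ 2 + (x 1) ^ 2 + (x 2 + s) ^ 2) with hB
    rcases eq_or_ne A 0 with hA0 | hA0
    · simp [hA0]
    rcases eq_or_ne B 0 with hB0 | hB0
    · simp [hB0]
    field_simp
    ring
  rw [h2, integral_neg] at key
  linarith [key]
end

section
/- Let 𝔰, 𝔟 be positive integers with 𝔟 ≤ 𝔰 − 1 and 2𝔟 − 𝔰 = 1, and let γ ∈ (0,1). Then the double sum ∑_{n,m ∈ ℕ} 2^{(n+m)(𝔟−𝔰)} · (max(ε, 2^{-n}, 2^{-m}))^{-𝔰} · max(2^{nγ}, 2^{mγ}) is bounded by C·ε^{-1-γ} for all ε ∈ (0,1], with C depending only on 𝔰, 𝔟, γ. -/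
/-!
Let `T` be the dyadic scale of `ε`, i.e. `2^{-T} ≤ ε` and `2^T ≤ 2/ε`. Since
`max(ε, 2^{-n}, 2^{-m}) ≥ 2^{-min(n,m,T)}`, the middle factor is at most
`2^{𝔰 min(n,m,T)} ≤ 2^{(𝔰/2)(min(n,T) + min(m,T))}`, and `max(2^{nγ}, 2^{mγ}) ≤ 2^{nγ} + 2^{mγ}`.
So every term is bounded by `u(n) v(m) + u(m) v(n)`, where `u`, `v` are the weights
`2^{(𝔰/2) min(n,T) - βn}` with `β = 𝔰 - 𝔟` and `β = 𝔰 - 𝔟 - γ`. Such a weight grows geometrically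
up to `n = T` and decays geometrically afterwards, so its sum is `O(2^{(𝔰/2 - β)T})`. As
`2𝔟 - 𝔰 = 1` the two exponents are `1/2` and `1/2 + γ`, and the double sum is
`O(2^{(1+γ)T}) = O(ε^{-1-γ})`.
-/

open Real

noncomputable def dyadicWeight (α β : ℝ) (T n : ℕ) : ℝ := (2 : ℝ) ^ (α * min (n : ℝ) T - β * n)

section dyadicWeight

variable (α β : ℝ) (T : ℕ)

lemma dyadicWeight_of_le {n : ℕ} (hn : n ≤ T) :
    dyadicWeight α β T n = ((2 : ℝ) ^ (α - β)) ^ n := by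
  rw [dyadicWeight, min_eq_left (by exact_mod_cast hn), ← rpow_natCast, ← rpow_mul zero_le_two]
  ring_nf

lemma dyadicWeight_add (n : ℕ) :
    dyadicWeight α β T (n + T) = (2 : ℝ) ^ ((α - β) * T) * ((2 : ℝ) ^ (-β)) ^ n := by
  rw [dyadicWeight, min_eq_right (by push_cast; linarith [(n.cast_nonneg : (0 : ℝ) ≤ n)]),
    ← rpow_natCast, ← rpow_mul zero_le_two, ← rpow_add two_pos]
  push_cast
  ring_nf

variable {β}

lemma summable_dyadicWeight (hβ : 0 < β) : Summable (dyadicWeight α β T) := by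
  rw [← summable_nat_add_iff T]
  simp_rw [dyadicWeight_add]
  exact (summable_geometric_of_lt_one (by positivity)
    (rpow_lt_one_of_one_lt_of_neg one_lt_two (by linarith))).mul_left _

variable {α}

lemma exists_tsum_dyadicWeight_le (hβ : 0 < β) (hβα : β < α) :
    ∃ C, 0 < C ∧ ∀ T : ℕ, ∑' n, dyadicWeight α β T n ≤ C * (2 : ℝ) ^ ((α - β) * T) := by
  set r := (2 : ℝ) ^ (α - β)
  set q := (2 : ℝ) ^ (-β)
  have hr : 1 < r := one_lt_rpow one_lt_two (by linarith)
  have hq : q < 1 := rpow_lt_one_of_one_lt_of_neg one_lt_two (by linarith)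
  refine ⟨(r - 1)⁻¹ + (1 - q)⁻¹,
    add_pos (inv_pos.2 (sub_pos.2 hr)) (inv_pos.2 (sub_pos.2 hq)), fun T => ?_⟩
  have hrT : (2 : ℝ) ^ ((α - β) * T) = r ^ T := by rw [rpow_mul zero_le_two, rpow_natCast]
  rw [← (summable_dyadicWeight α T hβ).sum_add_tsum_nat_add T,
    Finset.sum_congr rfl fun n hn => dyadicWeight_of_le α β T (Finset.mem_range.1 hn).le,
    geom_sum_eq hr.ne']
  simp_rw [dyadicWeight_add, tsum_mul_left]
  rw [tsum_geometric_of_lt_one (by positivity) hq, hrT]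
  have : (r ^ T - 1) / (r - 1) ≤ r ^ T * (r - 1)⁻¹ := by
    rw [div_eq_mul_inv]
    gcongr
    linarith
  linarith

end dyadicWeight

lemma tsum_le_two_mul_tsum_mul_tsum {ι : Type*} {F : ι × ι → ℝ} {f g : ι → ℝ}
    (hF : ∀ p, 0 ≤ F p) (hf : 0 ≤ f) (hg : 0 ≤ g) (hfs : Summable f) (hgs : Summable g)
    (hFfg : ∀ p, F p ≤ f p.1 * g p.2 + f p.2 * g p.1) :
    ∑' p, F p ≤ 2 * ((∑' i, f i) * ∑' i, g i) := by
  have h₁ := hfs.mul_of_nonneg hgs hf hg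
  have h₂ := hgs.mul_of_nonneg hfs hg hf
  have h₂' : Summable fun p : ι × ι => f p.2 * g p.1 := h₂.congr fun p => mul_comm _ _
  have h := h₁.add h₂'
  calc ∑' p, F p ≤ ∑' p : ι × ι, (f p.1 * g p.2 + f p.2 * g p.1) :=
        (Summable.of_nonneg_of_le hF hFfg h).tsum_le_tsum hFfg h
    _ = (∑' i, f i) * (∑' i, g i) + (∑' i, g i) * (∑' i, f i) := by
        rw [h₁.tsum_add h₂', ← hfs.tsum_mul_tsum hgs h₁, hgs.tsum_mul_tsum hfs h₂]
        congr 1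
        exact tsum_congr fun p => mul_comm _ _
    _ = 2 * ((∑' i, f i) * ∑' i, g i) := by ring

lemma exists_dyadic_scale {ε : ℝ} (hε₀ : 0 < ε) (hε₁ : ε ≤ 1) :
    ∃ T : ℕ, (2 : ℝ) ^ (-(T : ℝ)) ≤ ε ∧ ∀ a : ℝ, 0 ≤ a → (2 : ℝ) ^ (a * T) ≤ 2 ^ a * ε ^ (-a) := by
  obtain ⟨K, hK, hK'⟩ := exists_nat_pow_near (one_le_inv_iff₀.2 ⟨hε₀, hε₁⟩) one_lt_two
  refine ⟨K + 1, ?_, fun a ha => ?_⟩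
  · rw [rpow_neg zero_le_two, rpow_natCast, inv_le_comm₀ (by positivity) hε₀]
    exact hK'.le
  have hT : (2 : ℝ) ^ ((K + 1 : ℕ) : ℝ) ≤ 2 / ε := by
    rw [rpow_natCast, pow_succ, le_div_iff₀ hε₀]
    have := mul_le_mul_of_nonneg_right hK hε₀.le
    rw [inv_mul_cancel₀ hε₀.ne'] at this
    linarith
  calc (2 : ℝ) ^ (a * (K + 1 : ℕ)) = ((2 : ℝ) ^ ((K + 1 : ℕ) : ℝ)) ^ a := by
        rw [← rpow_mul zero_le_two, mul_comm]
    _ ≤ (2 / ε) ^ a := by gcongr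
    _ = 2 ^ a * ε ^ (-a) := by
        rw [div_rpow zero_le_two hε₀.le, div_eq_mul_inv, rpow_neg hε₀.le]

lemma max_rpow_neg_le {ε s : ℝ} {T : ℕ} (hs : 0 ≤ s) (hε : (2 : ℝ) ^ (-(T : ℝ)) ≤ ε) (n m : ℕ) :
    max ε (max ((2 : ℝ) ^ (-(n : ℝ))) ((2 : ℝ) ^ (-(m : ℝ)))) ^ (-s) ≤
      (2 : ℝ) ^ (s / 2 * (min (n : ℝ) T + min (m : ℝ) T)) := by
  set j := min (min (n : ℝ) m) T
  have hj : (2 : ℝ) ^ (-j) ≤ max ε (max ((2 : ℝ) ^ (-(n : ℝ))) ((2 : ℝ) ^ (-(m : ℝ)))) := by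
    have anti : Antitone fun x : ℝ => (2 : ℝ) ^ (-x) := fun x y hxy =>
      rpow_le_rpow_of_exponent_le one_le_two (neg_le_neg hxy)
    rw [anti.map_min, anti.map_min]
    exact max_le (le_max_right _ _) (hε.trans (le_max_left _ _))
  have hjn : j ≤ min (n : ℝ) T := min_le_min_right _ (min_le_left _ _)
  have hjm : j ≤ min (m : ℝ) T := min_le_min_right _ (min_le_right _ _)
  calc _ ≤ ((2 : ℝ) ^ (-j)) ^ (-s) := rpow_le_rpow_of_nonpos (by positivity) hj (by linarith)
    _ = (2 : ℝ) ^ (s * j) := by rw [← rpow_mul zero_le_two]; ring_nf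
    _ ≤ _ := rpow_le_rpow_of_exponent_le one_le_two (by nlinarith)

noncomputable def dyadicSummand (s b γ ε : ℝ) (p : ℕ × ℕ) : ℝ :=
  (2 : ℝ) ^ (((p.1 : ℝ) + (p.2 : ℝ)) * (b - s)) *
    (max ε (max ((2 : ℝ) ^ (-(p.1 : ℝ))) ((2 : ℝ) ^ (-(p.2 : ℝ))))) ^ (-s) *
    max ((2 : ℝ) ^ ((p.1 : ℝ) * γ)) ((2 : ℝ) ^ ((p.2 : ℝ) * γ))

lemma dyadicSummand_nonneg (s b γ ε : ℝ) (p : ℕ × ℕ) : 0 ≤ dyadicSummand s b γ ε p := by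
  unfold dyadicSummand
  positivity

lemma dyadicSummand_le {s b γ ε : ℝ} {T : ℕ} (hs : 0 ≤ s) (hε : (2 : ℝ) ^ (-(T : ℝ)) ≤ ε)
    (p : ℕ × ℕ) :
    dyadicSummand s b γ ε p ≤
      dyadicWeight (s / 2) (s - b) T p.1 * dyadicWeight (s / 2) (s - b - γ) T p.2 +
        dyadicWeight (s / 2) (s - b) T p.2 * dyadicWeight (s / 2) (s - b - γ) T p.1 := by
  obtain ⟨n, m⟩ := p
  calc dyadicSummand s b γ ε (n, m)
      ≤ (2 : ℝ) ^ (((n : ℝ) + m) * (b - s)) * (2 : ℝ) ^ (s / 2 * (min (n : ℝ) T + min (m : ℝ) T)) *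
          ((2 : ℝ) ^ ((m : ℝ) * γ) + (2 : ℝ) ^ ((n : ℝ) * γ)) := by
        unfold dyadicSummand
        gcongr
        · exact max_rpow_neg_le hs hε n m
        · rw [max_comm]
          exact max_le_add_of_nonneg (by positivity) (by positivity)
    _ = _ := by
        rw [mul_add]
        simp only [dyadicWeight, ← rpow_add two_pos]
        congr 2 <;> ring

theorem dyadic_double_sum_general (s b : ℕ)
    (hb : b + 1 ≤ s) (hsb : 2 * b = s + 1) (γ : ℝ) (hγ : γ ∈ Set.Ioo (0 : ℝ) 1) :
    ∃ C : ℝ, 0 < C ∧ ∀ ε ∈ Set.Ioc (0 : ℝ) 1,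
      (∑' p : ℕ × ℕ,
        (2 : ℝ) ^ (((p.1 : ℝ) + (p.2 : ℝ)) * ((b : ℝ) - (s : ℝ))) *
          (max ε (max ((2 : ℝ) ^ (-(p.1 : ℝ))) ((2 : ℝ) ^ (-(p.2 : ℝ))))) ^ (-(s : ℝ)) *
          max ((2 : ℝ) ^ ((p.1 : ℝ) * γ)) ((2 : ℝ) ^ ((p.2 : ℝ) * γ)))
        ≤ C * ε ^ (-1 - γ) := by
  obtain ⟨hγ₀, hγ₁⟩ := hγ
  have hb' : (b : ℝ) + 1 ≤ s := by exact_mod_cast hb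
  have hsb' : 2 * (b : ℝ) = s + 1 := by exact_mod_cast hsb
  obtain ⟨Cu, hCu, hu⟩ :=
    exists_tsum_dyadicWeight_le (α := s / 2) (β := s - b) (by linarith) (by linarith)
  obtain ⟨Cv, hCv, hv⟩ :=
    exists_tsum_dyadicWeight_le (α := s / 2) (β := s - b - γ) (by linarith) (by linarith)
  refine ⟨2 * (Cu * Cv) * 2 ^ (1 + γ), by positivity, fun ε ⟨hε₀, hε₁⟩ => ?_⟩
  obtain ⟨T, hεT, hTε⟩ := exists_dyadic_scale hε₀ hε₁
  calc ∑' p, dyadicSummand s b γ ε p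
      ≤ 2 * ((∑' n, dyadicWeight (s / 2) (s - b) T n) *
          ∑' n, dyadicWeight (s / 2) (s - b - γ) T n) :=
        tsum_le_two_mul_tsum_mul_tsum (dyadicSummand_nonneg s b γ ε)
          (fun _ => rpow_nonneg zero_le_two _) (fun _ => rpow_nonneg zero_le_two _)
          (summable_dyadicWeight _ T (by linarith)) (summable_dyadicWeight _ T (by linarith))
          (dyadicSummand_le (by positivity) hεT)
    _ ≤ 2 * ((Cu * 2 ^ (((s : ℝ) / 2 - (s - b)) * T)) *
          (Cv * 2 ^ (((s : ℝ) / 2 - (s - b - γ)) * T))) := by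
        gcongr
        · exact tsum_nonneg fun _ => rpow_nonneg zero_le_two _
        · exact hu T
        · exact hv T
    _ = 2 * (Cu * Cv) * 2 ^ ((1 + γ) * T) := by
        rw [mul_mul_mul_comm, ← rpow_add two_pos, ← mul_assoc]
        congr 2
        linear_combination (T : ℝ) * hsb'
    _ ≤ 2 * (Cu * Cv) * (2 ^ (1 + γ) * ε ^ (-(1 + γ))) := by gcongr; exact hTε _ (by positivity)
    _ = 2 * (Cu * Cv) * 2 ^ (1 + γ) * ε ^ (-1 - γ) := by rw [neg_add']; ring

/-- The key dyadic double-sum estimate: for positive integers `𝔰, 𝔟` with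
`𝔟 ≤ 𝔰 - 1` and `2𝔟 - 𝔰 = 1`, and `γ ∈ (0,1)`,
`∑_{n,m} 2^{(n+m)(𝔟-𝔰)} (max(ε, 2^{-n}, 2^{-m}))^{-𝔰} max(2^{nγ}, 2^{mγ}) ≤ C ε^{-1-γ}`
for all `ε ∈ (0,1]`. -/
theorem dyadic_double_sum (s b : ℕ) (hs : 0 < s) (hb0 : 0 < b)
    (hb : b + 1 ≤ s) (hsb : 2 * b = s + 1) (γ : ℝ) (hγ : γ ∈ Set.Ioo (0 : ℝ) 1) :
    ∃ C : ℝ, 0 < C ∧ ∀ ε ∈ Set.Ioc (0 : ℝ) 1,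
      (∑' p : ℕ × ℕ,
        (2 : ℝ) ^ (((p.1 : ℝ) + (p.2 : ℝ)) * ((b : ℝ) - (s : ℝ))) *
          (max ε (max ((2 : ℝ) ^ (-(p.1 : ℝ))) ((2 : ℝ) ^ (-(p.2 : ℝ))))) ^ (-(s : ℝ)) *
          max ((2 : ℝ) ^ ((p.1 : ℝ) * γ)) ((2 : ℝ) ^ ((p.2 : ℝ) * γ)))
        ≤ C * ε ^ (-1 - γ) :=
  dyadic_double_sum_general s b hb hsb γ hγ
end

section
/- Let K: (ℝ^d \ P) × ℝ^d → ℝ and K̄: ℝ^d × ℝ^d → ℝ be measurable, let |x|_∂ denote the distance from x to a fixed set P, and let ‖·‖ be a norm on ℝ^d with associated 'scaled dimension' |𝔰| (i.e. the d-dimensional volume of a ball of radius r is comparable to r^{|𝔰|}). Suppose |K(x,y)| ≤ A·(|x|_∂ + ‖x−y‖)^α ‖x−y‖^γ and |K̄(y,z)| ≤ B·‖y−z‖^{γ̄}, where γ + γ̄ > −|𝔰|, α + γ > −|𝔰|, and α + γ + γ̄ < −|𝔰|. Then the convolution K̃(x,z) = ∫ K(x,y) K̄(y,z) dy satisfies |K̃(x,z)|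 ≤ C·A·B·(|x|_∂ + ‖x−z‖)^{α+γ+γ̄+|𝔰|} for all x ∉ P and z ≠ x, where C depends only on the exponents and |𝔰|. -/
/-!
Write `u = ‖x - y‖`, `v = ‖y - z‖`, `r = ‖x - z‖` and `w = |x|_∂ + r`. Off `{x, z}` the
integrand `(|x|_∂ + u)^α u^γ v^γ'` is bounded by a pure power of the distance to one centre on each
of four regions: `u ≤ r/2` (by `w^α r^(γ'-α) u^(α+γ)`), `v ≤ r/2` (by `w^α r^γ v^γ'`), and, where
`u, v > r/2` so that `v ≥ u/4`, `u ≤ w` (by `w^α u^(γ+γ')`) or `u ≥ w` (by `u^(α+γ+γ')`).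
A power `ρ^β` integrates over `ρ ≤ R` when `β > -|𝔰|` and over `ρ ≥ R` when `β < -|𝔰|`, with
value `≲ R^(β+|𝔰|)`: on dyadic shells only the volume bound `|{ρ ≤ R}| ≤ c R^|𝔰|` is used, and the
shell contributions form a geometric series. Since `r ≤ w` and `γ + γ' + |𝔰| ≥ 0`, each of the
four pieces is `≲ w^(α+γ+γ'+|𝔰|)`.

The norm is not assumed measurable, so the shells are replaced by their measurable hulls, which
turns the estimates into bounds on measurable majorants of the integrand.
-/

open Real MeasureTheory
open scoped ENNReal

section DyadicShells

variable {V : Type*} [MeasurableSpace V] (μ : Measure V)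

theorem exists_measurable_majorant_tsum (S : ℕ → Set V) (b : ℕ → ℝ≥0∞) :
    ∃ g : V → ℝ≥0∞, Measurable g ∧ (∀ k, ∀ y ∈ S k, b k ≤ g y) ∧
      ∫⁻ y, g y ∂μ = ∑' k, b k * μ (S k) := by
  have hmeas (k : ℕ) : Measurable ((toMeasurable μ (S k)).indicator fun _ => b k) :=
    measurable_const.indicator (measurableSet_toMeasurable μ _)
  refine ⟨fun y => ∑' k, (toMeasurable μ (S k)).indicator (fun _ => b k) y,
    Measurable.tsum hmeas, fun k y hy => ?_, ?_⟩
  · calc b k = (toMeasurable μ (S k)).indicator (fun _ => b k) y :=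
          (Set.indicator_of_mem (subset_toMeasurable μ _ hy) (fun _ => b k)).symm
      _ ≤ _ := ENNReal.le_tsum k
  · rw [lintegral_tsum fun k => (hmeas k).aemeasurable]
    simp only [lintegral_indicator_const (measurableSet_toMeasurable μ _), measure_toMeasurable]

theorem tsum_ofReal_mul_geometric {D q : ℝ} (hD : 0 ≤ D) (hq₀ : 0 ≤ q) (hq₁ : q < 1) :
    ∑' k : ℕ, ENNReal.ofReal (D * q ^ k) = ENNReal.ofReal (D * (1 - q)⁻¹) := by
  rw [← ENNReal.ofReal_tsum_of_nonneg (fun k => by positivity)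
    ((summable_geometric_of_lt_one hq₀ hq₁).mul_left D), tsum_mul_left,
    tsum_geometric_of_lt_one hq₀ hq₁]

theorem mul_pow_rpow {R q : ℝ} (hR : 0 ≤ R) (hq : 0 ≤ q) (k : ℕ) (β : ℝ) :
    (R * q ^ k) ^ β = R ^ β * (q ^ β) ^ k := by
  rw [Real.mul_rpow hR (pow_nonneg hq k), Real.rpow_pow_comm hq]

noncomputable def nearShellConst (c s β : ℝ) : ℝ := c * 2⁻¹ ^ β * (1 - 2⁻¹ ^ (β + s))⁻¹

noncomputable def farShellConst (c s β : ℝ) : ℝ := c * 2 ^ s * (1 - 2 ^ (β + s))⁻¹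

theorem nearShellConst_pos {c s β : ℝ} (hc : 0 < c) (hβs : 0 < β + s) :
    0 < nearShellConst c s β := by
  have : (2⁻¹ : ℝ) ^ (β + s) < 1 := Real.rpow_lt_one (by norm_num) (by norm_num) hβs
  have : 0 < (1 - (2⁻¹ : ℝ) ^ (β + s))⁻¹ := inv_pos.2 (by linarith)
  unfold nearShellConst
  positivity

theorem farShellConst_pos {c s β : ℝ} (hc : 0 < c) (hβs : β + s < 0) :
    0 < farShellConst c s β := by
  have : (2 : ℝ) ^ (β + s) < 1 := Real.rpow_lt_one_of_one_lt_of_neg one_lt_two hβs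
  have : 0 < (1 - (2 : ℝ) ^ (β + s))⁻¹ := inv_pos.2 (by linarith)
  unfold farShellConst
  positivity

variable (ρ : V → ℝ) {c s β : ℝ}

theorem exists_measurable_rpow_le_near
    (hball : ∀ R, 0 < R → μ {y | ρ y ≤ R} ≤ ENNReal.ofReal (c * R ^ s)) (hc : 0 ≤ c)
    (hβ : β ≤ 0) (hβs : 0 < β + s) {R : ℝ} (hR : 0 < R) :
    ∃ g : V → ℝ≥0∞, Measurable g ∧
      (∀ y, 0 < ρ y → ρ y ≤ R → ENNReal.ofReal (ρ y ^ β) ≤ g y) ∧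
      ∫⁻ y, g y ∂μ ≤ ENNReal.ofReal (nearShellConst c s β * R ^ (β + s)) := by
  unfold nearShellConst
  set q : ℝ := 2⁻¹
  have hq : 0 < q := by norm_num [q]
  obtain ⟨g, hg, hgS, hgint⟩ := exists_measurable_majorant_tsum μ
    (fun k => {y | R * q ^ (k + 1) < ρ y ∧ ρ y ≤ R * q ^ k})
    (fun k => ENNReal.ofReal ((R * q ^ (k + 1)) ^ β))
  refine ⟨g, hg, fun y hy hyR => ?_, ?_⟩
  · obtain ⟨k, hk, hk'⟩ := exists_nat_pow_near ((one_le_div hy).2 hyR) one_lt_two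
    have hqk (n : ℕ) : R * q ^ n = R / 2 ^ n := by simp [q, div_eq_mul_inv]
    have hmem : R * q ^ (k + 1) < ρ y ∧ ρ y ≤ R * q ^ k := by
      rw [hqk, hqk, div_lt_iff₀ (by positivity), le_div_iff₀ (by positivity)]
      rw [div_lt_iff₀ hy, mul_comm] at hk'
      rw [le_div_iff₀ hy, mul_comm] at hk
      exact ⟨hk', hk⟩
    exact (ENNReal.ofReal_le_ofReal
      (Real.rpow_le_rpow_of_nonpos (by positivity) hmem.1.le hβ)).trans (hgS k y hmem)
  · have hρ₁ : q ^ (β + s) < 1 := Real.rpow_lt_one hq.le (by norm_num [q]) hβs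
    rw [hgint, mul_right_comm,
      ← tsum_ofReal_mul_geometric (by positivity) (by positivity) hρ₁]
    refine ENNReal.tsum_le_tsum fun k => ?_
    calc ENNReal.ofReal ((R * q ^ (k + 1)) ^ β) * μ {y | R * q ^ (k + 1) < ρ y ∧ ρ y ≤ R * q ^ k}
        ≤ ENNReal.ofReal ((R * q ^ (k + 1)) ^ β) * ENNReal.ofReal (c * (R * q ^ k) ^ s) :=
          mul_le_mul_right (measure_mono (fun y hy => hy.2) |>.trans (hball _ (by positivity))) _
      _ = ENNReal.ofReal (c * q ^ β * R ^ (β + s) * (q ^ (β + s)) ^ k) := by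
          rw [← ENNReal.ofReal_mul (by positivity), mul_pow_rpow hR.le hq.le,
            mul_pow_rpow hR.le hq.le, Real.rpow_add hR, Real.rpow_add hq, pow_succ, mul_pow]
          ring_nf

theorem exists_measurable_rpow_le_far
    (hball : ∀ R, 0 < R → μ {y | ρ y ≤ R} ≤ ENNReal.ofReal (c * R ^ s)) (hc : 0 ≤ c)
    (hβ : β ≤ 0) (hβs : β + s < 0) {R : ℝ} (hR : 0 < R) :
    ∃ g : V → ℝ≥0∞, Measurable g ∧
      (∀ y, R ≤ ρ y → ENNReal.ofReal (ρ y ^ β) ≤ g y) ∧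
      ∫⁻ y, g y ∂μ ≤ ENNReal.ofReal (farShellConst c s β * R ^ (β + s)) := by
  unfold farShellConst
  obtain ⟨g, hg, hgS, hgint⟩ := exists_measurable_majorant_tsum μ
    (fun k => {y | R * 2 ^ k ≤ ρ y ∧ ρ y ≤ R * 2 ^ (k + 1)})
    (fun k => ENNReal.ofReal ((R * 2 ^ k) ^ β))
  refine ⟨g, hg, fun y hyR => ?_, ?_⟩
  · obtain ⟨k, hk, hk'⟩ := exists_nat_pow_near ((one_le_div hR).2 hyR) one_lt_two
    have hmem : R * 2 ^ k ≤ ρ y ∧ ρ y ≤ R * 2 ^ (k + 1) := by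
      rw [le_div_iff₀ hR, mul_comm] at hk
      rw [div_lt_iff₀ hR, mul_comm] at hk'
      exact ⟨hk, hk'.le⟩
    exact (ENNReal.ofReal_le_ofReal
      (Real.rpow_le_rpow_of_nonpos (by positivity) hmem.1 hβ)).trans (hgS k y hmem)
  · have hρ₁ : (2 : ℝ) ^ (β + s) < 1 := Real.rpow_lt_one_of_one_lt_of_neg one_lt_two hβs
    rw [hgint, mul_right_comm,
      ← tsum_ofReal_mul_geometric (by positivity) (by positivity) hρ₁]
    refine ENNReal.tsum_le_tsum fun k => ?_
    calc ENNReal.ofReal ((R * 2 ^ k) ^ β) * μ {y | R * 2 ^ k ≤ ρ y ∧ ρ y ≤ R * 2 ^ (k + 1)}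
        ≤ ENNReal.ofReal ((R * 2 ^ k) ^ β) * ENNReal.ofReal (c * (R * 2 ^ (k + 1)) ^ s) :=
          mul_le_mul_right (measure_mono (fun y hy => hy.2) |>.trans (hball _ (by positivity))) _
      _ = ENNReal.ofReal (c * 2 ^ s * R ^ (β + s) * ((2 : ℝ) ^ (β + s)) ^ k) := by
          rw [← ENNReal.ofReal_mul (by positivity), mul_pow_rpow hR.le zero_le_two,
            mul_pow_rpow hR.le zero_le_two, Real.rpow_add hR, Real.rpow_add zero_lt_two,
            pow_succ, mul_pow]
          ring_nf

end DyadicShells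

theorem weighted_kernel_product_le_cases {a r u v α γ γ' : ℝ} (ha : 0 ≤ a) (hr : 0 < r)
    (hu : 0 < u) (hv : 0 < v) (hruv : r ≤ u + v) (hurv : u ≤ r + v)
    (hα : α ≤ 0) (hγ : γ ≤ 0) (hγ' : γ' ≤ 0) :
    (u ≤ r ∧ (a + u) ^ α * u ^ γ * v ^ γ'
        ≤ 2⁻¹ ^ γ' * (a + r) ^ α * r ^ (γ' - α) * u ^ (α + γ)) ∨
    (v ≤ r ∧ (a + u) ^ α * u ^ γ * v ^ γ' ≤ 2⁻¹ ^ (α + γ) * (a + r) ^ α * r ^ γ * v ^ γ') ∨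
    (u ≤ a + r ∧ (a + u) ^ α * u ^ γ * v ^ γ'
        ≤ 2⁻¹ ^ α * 4⁻¹ ^ γ' * (a + r) ^ α * u ^ (γ + γ')) ∨
    (a + r ≤ u ∧ (a + u) ^ α * u ^ γ * v ^ γ' ≤ 4⁻¹ ^ γ' * u ^ (α + γ + γ')) := by
  have hw : 0 < a + r := by positivity
  rcases le_or_gt u (r / 2) with hu₂ | hu₂
  · have h₁ : (a + u) ^ α ≤ ((a + r) * u / r) ^ α :=
      Real.rpow_le_rpow_of_nonpos (by positivity) (by rw [div_le_iff₀ hr]; nlinarith) hα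
    have h₂ : v ^ γ' ≤ (2⁻¹ * r) ^ γ' :=
      Real.rpow_le_rpow_of_nonpos (by positivity) (by linarith) hγ'
    refine Or.inl ⟨by linarith, ?_⟩
    calc (a + u) ^ α * u ^ γ * v ^ γ' ≤ ((a + r) * u / r) ^ α * u ^ γ * (2⁻¹ * r) ^ γ' := by
          gcongr
      _ = _ := by
          rw [Real.div_rpow (by positivity) hr.le, Real.mul_rpow hw.le hu.le,
            Real.mul_rpow (by norm_num) hr.le, Real.rpow_add hu, Real.rpow_sub hr]
          field_simp
  have h₁ : (a + u) ^ α ≤ (2⁻¹ * (a + r)) ^ α :=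
    Real.rpow_le_rpow_of_nonpos (by positivity) (by linarith) hα
  rcases le_or_gt v (r / 2) with hv₂ | hv₂
  · have h₂ : u ^ γ ≤ (2⁻¹ * r) ^ γ := Real.rpow_le_rpow_of_nonpos (by positivity) (by linarith) hγ
    refine Or.inr (Or.inl ⟨by linarith, ?_⟩)
    calc (a + u) ^ α * u ^ γ * v ^ γ' ≤ (2⁻¹ * (a + r)) ^ α * (2⁻¹ * r) ^ γ * v ^ γ' := by
          gcongr
      _ = _ := by
          rw [Real.mul_rpow (by norm_num) hw.le, Real.mul_rpow (by norm_num) hr.le,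
            Real.rpow_add (by norm_num)]
          ring
  -- `v ≥ u/4`: either `u ≤ 2r < 4v`, or `v ≥ u - r > u/2`
  have h₃ : v ^ γ' ≤ (4⁻¹ * u) ^ γ' := Real.rpow_le_rpow_of_nonpos (by positivity) (by linarith) hγ'
  rcases le_or_gt u (a + r) with huw | huw
  · refine Or.inr (Or.inr (Or.inl ⟨huw, ?_⟩))
    calc (a + u) ^ α * u ^ γ * v ^ γ' ≤ (2⁻¹ * (a + r)) ^ α * u ^ γ * (4⁻¹ * u) ^ γ' := by
          gcongr
      _ = _ := by
          rw [Real.mul_rpow (by norm_num) hw.le, Real.mul_rpow (by norm_num) hu.le,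
            Real.rpow_add hu]
          ring
  · have h₄ : (a + u) ^ α ≤ u ^ α := Real.rpow_le_rpow_of_nonpos hu (by linarith) hα
    refine Or.inr (Or.inr (Or.inr ⟨huw.le, ?_⟩))
    calc (a + u) ^ α * u ^ γ * v ^ γ' ≤ u ^ α * u ^ γ * (4⁻¹ * u) ^ γ' := by
          gcongr
      _ = _ := by
          rw [Real.mul_rpow (by norm_num) hu.le, Real.rpow_add hu, Real.rpow_add hu]
          ring

theorem ofReal_weighted_kernel_product_le_add {a r u v α γ γ' : ℝ} (ha : 0 ≤ a) (hr : 0 < r)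
    (hu : 0 < u) (hv : 0 < v) (hruv : r ≤ u + v) (hurv : u ≤ r + v)
    (hα : α ≤ 0) (hγ : γ ≤ 0) (hγ' : γ' ≤ 0) {G₁ G₂ G₃ G₄ : ℝ≥0∞}
    (hG₁ : u ≤ r → ENNReal.ofReal (u ^ (α + γ)) ≤ G₁) (hG₂ : v ≤ r → ENNReal.ofReal (v ^ γ') ≤ G₂)
    (hG₃ : u ≤ a + r → ENNReal.ofReal (u ^ (γ + γ')) ≤ G₃)
    (hG₄ : a + r ≤ u → ENNReal.ofReal (u ^ (α + γ + γ')) ≤ G₄) :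
    ENNReal.ofReal ((a + u) ^ α * u ^ γ * v ^ γ')
      ≤ ENNReal.ofReal (2⁻¹ ^ γ' * (a + r) ^ α * r ^ (γ' - α)) * G₁
        + ENNReal.ofReal (2⁻¹ ^ (α + γ) * (a + r) ^ α * r ^ γ) * G₂
        + ENNReal.ofReal (2⁻¹ ^ α * 4⁻¹ ^ γ' * (a + r) ^ α) * G₃
        + ENNReal.ofReal (4⁻¹ ^ γ') * G₄ := by
  have hmul {M t : ℝ} {G : ℝ≥0∞} (hM : 0 ≤ M) (ht : ENNReal.ofReal t ≤ G) :
      ENNReal.ofReal (M * t) ≤ ENNReal.ofReal M * G := by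
    rw [ENNReal.ofReal_mul hM]
    gcongr
  rcases weighted_kernel_product_le_cases ha hr hu hv hruv hurv hα hγ hγ' with
    ⟨hur, hle⟩ | ⟨hvr, hle⟩ | ⟨huw, hle⟩ | ⟨hwu, hle⟩ <;>
    refine (ENNReal.ofReal_le_ofReal hle).trans ?_
  · exact le_add_right (le_add_right (le_add_right (hmul (by positivity) (hG₁ hur))))
  · exact le_add_right (le_add_right (le_add_left (hmul (by positivity) (hG₂ hvr))))
  · exact le_add_right (le_add_left (hmul (by positivity) (hG₃ huw)))
  · exact le_add_left (hmul (by positivity) (hG₄ hwu))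

theorem rpow_mul_rpow_mul_rpow_le {r w α p q e : ℝ} (hr : 0 < r) (hrw : r ≤ w)
    (hpq : 0 ≤ p + q) (he : α + (p + q) = e) : w ^ α * r ^ p * r ^ q ≤ w ^ e := by
  have hw : 0 < w := hr.trans_le hrw
  rw [mul_assoc, ← Real.rpow_add hr, ← he, Real.rpow_add hw]
  exact mul_le_mul_of_nonneg_left (Real.rpow_le_rpow hr.le hrw hpq) (by positivity)

theorem weighted_pieces_sum_le {a r s α γ γ' N₁ N₂ N₃ N₄ : ℝ} (ha : 0 ≤ a) (hr : 0 < r)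
    (hp : 0 ≤ γ + γ' + s) (hN₁ : 0 ≤ N₁) (hN₂ : 0 ≤ N₂) :
    2⁻¹ ^ γ' * (a + r) ^ α * r ^ (γ' - α) * (N₁ * r ^ (α + γ + s))
      + 2⁻¹ ^ (α + γ) * (a + r) ^ α * r ^ γ * (N₂ * r ^ (γ' + s))
      + 2⁻¹ ^ α * 4⁻¹ ^ γ' * (a + r) ^ α * (N₃ * (a + r) ^ (γ + γ' + s))
      + 4⁻¹ ^ γ' * (N₄ * (a + r) ^ (α + γ + γ' + s))
    ≤ (2⁻¹ ^ γ' * N₁ + 2⁻¹ ^ (α + γ) * N₂ + 2⁻¹ ^ α * 4⁻¹ ^ γ' * N₃ + 4⁻¹ ^ γ' * N₄)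
      * (a + r) ^ (α + γ + γ' + s) := by
  have hrw : r ≤ a + r := le_add_of_nonneg_left ha
  have b₁ : (a + r) ^ α * r ^ (γ' - α) * r ^ (α + γ + s) ≤ (a + r) ^ (α + γ + γ' + s) :=
    rpow_mul_rpow_mul_rpow_le hr hrw (by linarith) (by ring)
  have b₂ : (a + r) ^ α * r ^ γ * r ^ (γ' + s) ≤ (a + r) ^ (α + γ + γ' + s) :=
    rpow_mul_rpow_mul_rpow_le hr hrw (by linarith) (by ring)
  have b₃ : (a + r) ^ α * (a + r) ^ (γ + γ' + s) = (a + r) ^ (α + γ + γ' + s) := by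
    rw [← Real.rpow_add (by positivity)]; ring_nf
  linear_combination (2⁻¹ ^ γ' * N₁) * b₁ + (2⁻¹ ^ (α + γ) * N₂) * b₂
    + 2⁻¹ ^ α * 4⁻¹ ^ γ' * N₃ * b₃

theorem lintegral_weighted_kernel_product_le {V : Type*} [MeasurableSpace V] (μ : Measure V)
    [NullSingletonClass μ] (D : V → V → ℝ) {c s α γ γ' : ℝ}
    (hpos : ∀ x y, x ≠ y → 0 < D x y) (hsymm : ∀ x y, D x y = D y x)
    (htri : ∀ x y z, D x z ≤ D x y + D y z)
    (hball : ∀ p R, 0 < R → μ {y | D p y ≤ R} ≤ ENNReal.ofReal (c * R ^ s)) (hc : 0 < c)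
    (hα : α ≤ 0) (hγ : γ ≤ 0) (hγ' : γ' ≤ 0)
    (h₁ : -s < γ + γ') (h₂ : -s < α + γ) (h₃ : α + γ + γ' < -s) :
    ∃ C, 0 < C ∧ ∀ a, 0 ≤ a → ∀ x z, x ≠ z →
      ∫⁻ y, ENNReal.ofReal ((a + D x y) ^ α * D x y ^ γ * D y z ^ γ') ∂μ
        ≤ ENNReal.ofReal (C * (a + D x z) ^ (α + γ + γ' + s)) := by
  have hN₁ := nearShellConst_pos (s := s) (β := α + γ) hc (by linarith)
  have hN₂ := nearShellConst_pos (s := s) (β := γ') hc (by linarith)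
  have hN₃ := nearShellConst_pos (s := s) (β := γ + γ') hc (by linarith)
  have hN₄ := farShellConst_pos (s := s) (β := α + γ + γ') hc (by linarith)
  refine ⟨2⁻¹ ^ γ' * nearShellConst c s (α + γ) + 2⁻¹ ^ (α + γ) * nearShellConst c s γ'
    + 2⁻¹ ^ α * 4⁻¹ ^ γ' * nearShellConst c s (γ + γ')
    + 4⁻¹ ^ γ' * farShellConst c s (α + γ + γ'), by positivity, fun a ha x z hxz => ?_⟩
  have hr : 0 < D x z := hpos x z hxz
  have hw : 0 < a + D x z := by positivity
  obtain ⟨g₁, hg₁, hg₁y, hg₁int⟩ := exists_measurable_rpow_le_near μ (D x) (hball x) hc.le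
    (add_nonpos hα hγ) (by linarith) hr
  obtain ⟨g₂, hg₂, hg₂y, hg₂int⟩ := exists_measurable_rpow_le_near μ (D z) (hball z) hc.le
    hγ' (by linarith) hr
  obtain ⟨g₃, hg₃, hg₃y, hg₃int⟩ := exists_measurable_rpow_le_near μ (D x) (hball x) hc.le
    (add_nonpos hγ hγ') (by linarith) hw
  obtain ⟨g₄, hg₄, hg₄y, hg₄int⟩ := exists_measurable_rpow_le_far μ (D x) (hball x) hc.le
    (add_nonpos (add_nonpos hα hγ) hγ') (by linarith) hw
  refine (lintegral_mono_ae (g := fun y =>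
      ENNReal.ofReal (2⁻¹ ^ γ' * (a + D x z) ^ α * D x z ^ (γ' - α)) * g₁ y
      + ENNReal.ofReal (2⁻¹ ^ (α + γ) * (a + D x z) ^ α * D x z ^ γ) * g₂ y
      + ENNReal.ofReal (2⁻¹ ^ α * 4⁻¹ ^ γ' * (a + D x z) ^ α) * g₃ y
      + ENNReal.ofReal (4⁻¹ ^ γ') * g₄ y) ?_).trans ?_
  · filter_upwards [Measure.ae_ne μ x, Measure.ae_ne μ z] with y hyx hyz
    have hu := hpos x y hyx.symm
    have hv := hpos z y hyz.symm
    rw [hsymm y z]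
    exact ofReal_weighted_kernel_product_le_add ha hr hu hv (hsymm y z ▸ htri x y z)
      (hsymm y z ▸ htri x z y) hα hγ hγ' (hg₁y y hu) (hg₂y y hv) (hg₃y y hu) (hg₄y y)
  rw [lintegral_add_left (by fun_prop), lintegral_add_left (by fun_prop),
    lintegral_add_left (by fun_prop)]
  simp only [lintegral_const_mul' _ _ ENNReal.ofReal_ne_top]
  grw [hg₁int, hg₂int, hg₃int, hg₄int]
  rw [← ENNReal.ofReal_mul (by positivity), ← ENNReal.ofReal_mul (by positivity),
    ← ENNReal.ofReal_mul (by positivity), ← ENNReal.ofReal_mul (by positivity),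
    ← ENNReal.ofReal_add (by positivity) (by positivity),
    ← ENNReal.ofReal_add (by positivity) (by positivity),
    ← ENNReal.ofReal_add (by positivity) (by positivity)]
  exact ENNReal.ofReal_le_ofReal (weighted_pieces_sum_le ha hr (by linarith) hN₁.le hN₂.le)

theorem integrable_and_norm_integral_le_of_lintegral_le {V E : Type*} [MeasurableSpace V]
    {μ : Measure V} [NormedAddCommGroup E] [NormedSpace ℝ E] {f : V → E} {F : V → ℝ} {M B : ℝ}
    (hf : AEStronglyMeasurable f μ) (hM : 0 ≤ M) (hB : 0 ≤ B)
    (hfF : ∀ᵐ y ∂μ, ‖f y‖ ≤ M * F y) (hF : ∫⁻ y, ENNReal.ofReal (F y) ∂μ ≤ ENNReal.ofReal B) :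
    Integrable f μ ∧ ‖∫ y, f y ∂μ‖ ≤ M * B := by
  have hlint : ∫⁻ y, ENNReal.ofReal ‖f y‖ ∂μ ≤ ENNReal.ofReal (M * B) :=
    calc ∫⁻ y, ENNReal.ofReal ‖f y‖ ∂μ ≤ ∫⁻ y, ENNReal.ofReal M * ENNReal.ofReal (F y) ∂μ :=
          lintegral_mono_ae (hfF.mono fun y hy => by
            rw [← ENNReal.ofReal_mul hM]; exact ENNReal.ofReal_le_ofReal hy)
      _ = ENNReal.ofReal M * ∫⁻ y, ENNReal.ofReal (F y) ∂μ :=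
          lintegral_const_mul' _ _ ENNReal.ofReal_ne_top
      _ ≤ ENNReal.ofReal (M * B) := by rw [ENNReal.ofReal_mul hM]; gcongr
  refine ⟨⟨hf, (hasFiniteIntegral_iff_norm f).2 (hlint.trans_lt ENNReal.ofReal_lt_top)⟩, ?_⟩
  calc ‖∫ y, f y ∂μ‖ ≤ (∫⁻ y, ENNReal.ofReal ‖f y‖ ∂μ).toReal := norm_integral_le_lintegral_norm f
      _ ≤ (ENNReal.ofReal (M * B)).toReal := ENNReal.toReal_mono ENNReal.ofReal_ne_top hlint
      _ = M * B := ENNReal.toReal_ofReal (by positivity)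

theorem measure_setOf_apply_sub_le_eq {G : Type*} [AddGroup G] [MeasurableSpace G] [MeasurableAdd G]
    (μ : Measure G) [μ.IsAddRightInvariant] {N : G → ℝ} (hN : ∀ x, N (-x) = N x) (p : G)
    (R : ℝ) : μ {y | N (p - y) ≤ R} = μ {v | N v ≤ R} := by
  rw [← measure_preimage_add_right μ (-p) {v | N v ≤ R}]
  congr 1
  ext y
  change N (p - y) ≤ R ↔ N (y + -p) ≤ R
  rw [← sub_eq_add_neg, ← neg_sub, hN]

theorem nonneg_of_map_neg_of_map_add_le {G : Type*} [AddGroup G] {N : G → ℝ}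
    (hneg : ∀ x, N (-x) = N x) (hadd : ∀ x y, N (x + y) ≤ N x + N y) (x : G) : 0 ≤ N x := by
  have h₀ : 0 ≤ N 0 := by simpa using hadd 0 0
  have h₁ := hadd x (-x)
  rw [add_neg_cancel, hneg] at h₁
  linarith

theorem kernel_convolution_ii_general (d : ℕ) (sdim : ℝ)
    (nrm : (Fin d → ℝ) → ℝ)
    (hnpos : ∀ x : Fin d → ℝ, x ≠ 0 → 0 < nrm x)
    (hnsymm : ∀ x : Fin d → ℝ, nrm (-x) = nrm x)
    (hntri : ∀ x y : Fin d → ℝ, nrm (x + y) ≤ nrm x + nrm y)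
    (hvol : ∃ c₁ c₂ : ℝ, 0 < c₁ ∧ 0 < c₂ ∧ ∀ r : ℝ, 0 < r →
      c₁ * r ^ sdim ≤ (volume {y : Fin d → ℝ | nrm y ≤ r}).toReal ∧
        (volume {y : Fin d → ℝ | nrm y ≤ r}).toReal ≤ c₂ * r ^ sdim)
    (P : Set (Fin d → ℝ))
    (dP : (Fin d → ℝ) → ℝ)
    (hdP : ∀ x, dP x = sInf ((fun p => nrm (x - p)) '' P))
    (α γ γ' : ℝ) (hα : α ≤ 0) (hγ : γ ≤ 0) (hγ' : γ' ≤ 0)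
    (h1 : -sdim < γ + γ') (h2 : -sdim < α + γ) (h3 : α + γ + γ' < -sdim) :
    ∃ C : ℝ, 0 < C ∧ ∀ A B : ℝ, 0 ≤ A → 0 ≤ B →
      ∀ K K' : (Fin d → ℝ) → (Fin d → ℝ) → ℝ,
        Measurable (Function.uncurry K) → Measurable (Function.uncurry K') →
        (∀ x, x ∉ P → ∀ y, y ≠ x →
          |K x y| ≤ A * (dP x + nrm (x - y)) ^ α * nrm (x - y) ^ γ) →
        (∀ y z : Fin d → ℝ, z ≠ y → |K' y z| ≤ B * nrm (y - z) ^ γ') →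
        ∀ x, x ∉ P → ∀ z, z ≠ x →
          Integrable (fun y => K x y * K' y z) ∧
          |∫ y, K x y * K' y z|
            ≤ C * A * B * (dP x + nrm (x - z)) ^ (α + γ + γ' + sdim) := by
  rcases isEmpty_or_nonempty (Fin d) with hd | hd
  · exact ⟨1, one_pos, fun _ _ _ _ _ _ _ _ _ _ x _ z hzx => absurd (Subsingleton.elim z x) hzx⟩
  obtain ⟨c₁, c₂, hc₁, hc₂, hvol⟩ := hvol
  have hnn := nonneg_of_map_neg_of_map_add_le hnsymm hntri
  have hball (p : Fin d → ℝ) (R : ℝ) (hR : 0 < R) :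
      volume {y | nrm (p - y) ≤ R} ≤ ENNReal.ofReal (c₂ * R ^ sdim) := by
    obtain ⟨hlo, hhi⟩ := hvol R hR
    have hpos : 0 < (volume {y | nrm y ≤ R}).toReal := lt_of_lt_of_le (by positivity) hlo
    rwa [measure_setOf_apply_sub_le_eq volume hnsymm,
      ENNReal.le_ofReal_iff_toReal_le (ENNReal.toReal_pos_iff.1 hpos).2.ne (by positivity)]
  obtain ⟨C, hC, hmain⟩ := lintegral_weighted_kernel_product_le volume (fun p y => nrm (p - y))
    (fun x y hxy => hnpos _ (sub_ne_zero.2 hxy)) (fun x y => by rw [← neg_sub, hnsymm])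
    (fun x y z => by simpa using hntri (x - y) (y - z)) hball hc₂ hα hγ hγ' h1 h2 h3
  refine ⟨C, hC, fun A B hA hB K K' hKm hK'm hK hK' x hx z hzx => ?_⟩
  have ha : 0 ≤ dP x := hdP x ▸ Real.sInf_nonneg (by rintro _ ⟨p, -, rfl⟩; exact hnn _)
  have hfF : ∀ᵐ y, ‖K x y * K' y z‖
      ≤ A * B * ((dP x + nrm (x - y)) ^ α * nrm (x - y) ^ γ * nrm (y - z) ^ γ') := by
    filter_upwards [Measure.ae_ne volume x, Measure.ae_ne volume z] with y hyx hyz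
    have := hnn (x - y)
    rw [Real.norm_eq_abs, abs_mul]
    calc |K x y| * |K' y z|
        ≤ (A * (dP x + nrm (x - y)) ^ α * nrm (x - y) ^ γ) * (B * nrm (y - z) ^ γ') :=
          mul_le_mul (hK x hx y hyx) (hK' y z hyz.symm) (abs_nonneg _) (by positivity)
      _ = _ := by ring
  obtain ⟨hint, hnorm⟩ := integrable_and_norm_integral_le_of_lintegral_le
    (f := fun y => K x y * K' y z)
    (hKm.of_uncurry_left.mul hK'm.of_uncurry_right).aestronglyMeasurable (mul_nonneg hA hB)
    (mul_nonneg hC.le (Real.rpow_nonneg (add_nonneg ha (hnn _)) _)) hfF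
    (hmain (dP x) ha x z hzx.symm)
  exact ⟨hint, (Real.norm_eq_abs _).symm.trans_le (hnorm.trans_eq (by ring))⟩

/-- Kernel convolution lemma, part (ii): if
`|K(x,y)| ≤ A (|x|_∂ + ‖x-y‖)^α ‖x-y‖^γ` and `|K̄(y,z)| ≤ B ‖y-z‖^γ̄`, with
`γ + γ̄ > -|𝔰|`, `α + γ > -|𝔰|`, `α + γ + γ̄ < -|𝔰|`, then the convolution
`K̃(x,z) = ∫ K(x,y) K̄(y,z) dy` converges absolutely and satisfies
`|K̃(x,z)| ≤ C A B (|x|_∂ + ‖x-z‖)^{α+γ+γ̄+|𝔰|}`. -/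
theorem kernel_convolution_ii (d : ℕ) (sdim : ℝ) (hsdim : 0 < sdim)
    (nrm : (Fin d → ℝ) → ℝ)
    (hn0 : nrm 0 = 0) (hnpos : ∀ x : Fin d → ℝ, x ≠ 0 → 0 < nrm x)
    (hnsymm : ∀ x : Fin d → ℝ, nrm (-x) = nrm x)
    (hntri : ∀ x y : Fin d → ℝ, nrm (x + y) ≤ nrm x + nrm y)
    (hvol : ∃ c₁ c₂ : ℝ, 0 < c₁ ∧ 0 < c₂ ∧ ∀ r : ℝ, 0 < r →
      c₁ * r ^ sdim ≤ (volume {y : Fin d → ℝ | nrm y ≤ r}).toReal ∧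
        (volume {y : Fin d → ℝ | nrm y ≤ r}).toReal ≤ c₂ * r ^ sdim)
    (P : Set (Fin d → ℝ)) (hP : IsClosed P)
    (dP : (Fin d → ℝ) → ℝ)
    (hdP : ∀ x, dP x = sInf ((fun p => nrm (x - p)) '' P))
    (α γ γ' : ℝ) (hα : α ≤ 0) (hγ : γ ≤ 0) (hγ' : γ' ≤ 0)
    (h1 : -sdim < γ + γ') (h2 : -sdim < α + γ) (h3 : α + γ + γ' < -sdim) :
    ∃ C : ℝ, 0 < C ∧ ∀ A B : ℝ, 0 ≤ A → 0 ≤ B →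
      ∀ K K' : (Fin d → ℝ) → (Fin d → ℝ) → ℝ,
        Measurable (Function.uncurry K) → Measurable (Function.uncurry K') →
        (∀ x, x ∉ P → ∀ y, y ≠ x →
          |K x y| ≤ A * (dP x + nrm (x - y)) ^ α * nrm (x - y) ^ γ) →
        (∀ y z : Fin d → ℝ, z ≠ y → |K' y z| ≤ B * nrm (y - z) ^ γ') →
        ∀ x, x ∉ P → ∀ z, z ≠ x →
          Integrable (fun y => K x y * K' y z) ∧
          |∫ y, K x y * K' y z|
            ≤ C * A * B * (dP x + nrm (x - z)) ^ (α + γ + γ' + sdim) :=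
  kernel_convolution_ii_general d sdim nrm hnpos hnsymm hntri hvol P dP hdP α γ γ' hα hγ hγ' h1 h2
    h3
end
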